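/- For every n ≥ 1, any SDNF formula equivalent to ⋀_{j=1}^{n} [(□_i p_j ∧ ◇_i p_j) ∨ (□_i p'_j ∧ ◇_i p'_j)] must contain at least 2^n disjuncts (epistemic terms). -/

import Mathlib

universe u v

inductive Fm (A P : Type) : Type
  | tru : Fm A P
  | var : P → Fm A P
  | neg : Fm A P → Fm A P
  | and : Fm A P → Fm A P → Fm A P
  | box : A → Fm A P → Fm A P

namespace Fm
variable {A P : Type}
def or (φ ψ : Fm A P) : Fm A P := neg ((neg φ).and (neg ψ))
def bot : Fm A P := neg tru
def dia (i : A) (φ : Fm A P) : Fm A P := neg (box i (neg φ))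
end Fm

structure KM (A P : Type) where
  S : Type
  R : A → S → S → Prop
  V : S → P → Prop

variable {A P : Type}

def Sat (M : KM A P) : M.S → Fm A P → Prop
  | _, .tru => True
  | s, .var p => M.V s p
  | s, .neg φ => ¬ Sat M s φ
  | s, .and φ ψ => Sat M s φ ∧ Sat M s ψ
  | s, .box i φ => ∀ t, M.R i s t → Sat M t φ

def Satisfiable (φ : Fm A P) : Prop := ∃ (M : KM A P) (s : M.S), Sat M s φ

def Entails (φ ψ : Fm A P) : Prop := ∀ (M : KM A P) (s : M.S), Sat M s φ → Sat M s ψ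

def FEquiv (φ ψ : Fm A P) : Prop := Entails φ ψ ∧ Entails ψ φ

def IsProp : Fm A P → Prop
  | .tru => True
  | .var _ => True
  | .neg φ => IsProp φ
  | .and φ ψ => IsProp φ ∧ IsProp ψ
  | .box _ _ => False

def Basic (φ : Fm A P) : Prop :=
  IsProp φ ∨ (∃ i ψ, φ = Fm.box i ψ) ∨ (∃ i ψ, φ = Fm.dia i ψ)

def conj : List (Fm A P) → Fm A P
  | [] => Fm.tru
  | φ :: L => φ.and (conj L)

def disj : List (Fm A P) → Fm A P
  | [] => Fm.bot
  | φ :: L => φ.or (disj L)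

def EpTerm (L : List (Fm A P)) : Prop := ∀ c ∈ L, Basic c

def LogSep (L : List (Fm A P)) : Prop :=
  ∀ η : Fm A P, Basic η → Entails (conj L) η → ∃ α ∈ L, Entails α η

def fvars : Fm A P → Set P
  | .tru => ∅
  | .var p => {p}
  | .neg φ => fvars φ
  | .and φ ψ => fvars φ ∪ fvars ψ
  | .box _ φ => fvars φ

def fsize : Fm A P → ℕ
  | .tru => 1
  | .var _ => 1
  | .neg φ => fsize φ + 1
  | .and φ ψ => fsize φ + fsize ψ + 1
  | .box _ φ => fsize φ + 1

mutual
  inductive IsSTE : Fm A P → Prop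
    | prop {α : Fm A P} : IsProp α → IsSTE α
    | mk (α : Fm A P) (B : List (A × Fm A P × List (Fm A P))) :
        IsProp α →
        (∀ x ∈ B, IsSDNF x.2.1) →
        (∀ x ∈ B, ∀ γ ∈ x.2.2, IsSDNF γ) →
        (∀ x ∈ B, ∀ γ ∈ x.2.2, Entails γ x.2.1) →
        IsSTE (α.and (conj (B.map fun x =>
          (Fm.box x.1 x.2.1).and (conj (x.2.2.map (Fm.dia x.1))))))
  inductive IsSDNF : Fm A P → Prop
    | single {φ : Fm A P} : IsSTE φ → IsSDNF φ
    | or {φ ψ : Fm A P} : IsSDNF φ → IsSDNF ψ → IsSDNF (φ.or ψ)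
end

inductive IsLit : Fm A P → Prop
  | pos (p : P) : IsLit (Fm.var p)
  | neg (p : P) : IsLit (Fm.neg (Fm.var p))

inductive IsTE : Fm A P → Prop
  | lit {φ : Fm A P} : IsLit φ → IsTE φ
  | and {φ ψ : Fm A P} : IsTE φ → IsTE ψ → IsTE (φ.and ψ)

def cover (i : A) (Φ : List (Fm A P)) : Fm A P :=
  (Fm.box i (disj Φ)).and (conj (Φ.map (Fm.dia i)))

inductive IsCDNF : Fm A P → Prop
  | base (τ : Fm A P) (B : List (A × List (Fm A P))) :
      IsTE τ → Satisfiable τ →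
      (∀ x ∈ B, ∀ φ ∈ x.2, IsCDNF φ) →
      IsCDNF (τ.and (conj (B.map fun x => cover x.1 x.2)))
  | or {φ ψ : Fm A P} : IsCDNF φ → IsCDNF ψ → IsCDNF (φ.or ψ)

/-!
For `f : Fin n → Bool` let `M_f` be a root with a single `i`-successor, a dead end in which exactly
the `p j` with `f j` and the `p' j` with `¬ f j` hold. Each `M_f` satisfies the target formula, so
some disjunct `T_f` holds at its root. An STE is preserved when two roots with the same valuation
are merged into one whose successors are the union of theirs: the propositional part and the boxes
survive because every new successor is an old one, the diamonds because every old successor is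
still there. If `T_f = T_g` with `f ≠ g`, the merged root satisfies `T_f`, hence the target
formula, yet it sees both leaves, which disagree at some `j`. So `f ↦ T_f` is injective.
-/

section Semantics

variable {M : KM A P} {s : M.S}

theorem sat_or {φ ψ : Fm A P} : Sat M s (φ.or ψ) ↔ Sat M s φ ∨ Sat M s ψ := by
  simp only [Fm.or, Sat]
  tauto

theorem sat_dia {a : A} {φ : Fm A P} : Sat M s (Fm.dia a φ) ↔ ∃ t, M.R a s t ∧ Sat M t φ := by
  simp [Fm.dia, Sat]

theorem sat_conj {L : List (Fm A P)} : Sat M s (conj L) ↔ ∀ φ ∈ L, Sat M s φ := by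
  induction L with
  | nil => simp [conj, Sat]
  | cons φ L ih => simp [conj, Sat, ih]

theorem sat_disj {L : List (Fm A P)} : Sat M s (disj L) ↔ ∃ φ ∈ L, Sat M s φ := by
  induction L with
  | nil => simp [disj, Fm.bot, Sat]
  | cons φ L ih => simp [disj, sat_or, ih]

theorem sat_iff_of_isProp {t : M.S} (hV : ∀ q, M.V s q ↔ M.V t q) :
    ∀ φ : Fm A P, IsProp φ → (Sat M s φ ↔ Sat M t φ)
  | .tru, _ => Iff.rfl
  | .var q, _ => hV q
  | .neg φ, hφ => not_congr (sat_iff_of_isProp hV φ hφ)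
  | .and φ ψ, hφψ => and_congr (sat_iff_of_isProp hV φ hφψ.1) (sat_iff_of_isProp hV ψ hφψ.2)

theorem IsSTE.sat_of_succ_eq_union {T : Fm A P} (hT : IsSTE T) {s₁ s₂ : M.S}
    (hV : ∀ q, M.V s q ↔ M.V s₁ q) (hR : ∀ a t, M.R a s t ↔ M.R a s₁ t ∨ M.R a s₂ t)
    (h₁ : Sat M s₁ T) (h₂ : Sat M s₂ T) : Sat M s T := by
  cases hT with
  | prop hα => exact (sat_iff_of_isProp hV T hα).mpr h₁
  | mk α B hα _ _ _ =>
    refine ⟨(sat_iff_of_isProp hV α hα).mpr h₁.1, sat_conj.mpr ?_⟩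
    simp only [List.mem_map]
    rintro _ ⟨x, hx, rfl⟩
    obtain ⟨hbox₁, hdia₁⟩ := sat_conj.mp h₁.2 _ (List.mem_map_of_mem hx)
    have hbox₂ := (sat_conj.mp h₂.2 _ (List.mem_map_of_mem hx)).1
    refine ⟨fun t ht => (hR _ t |>.mp ht).elim (hbox₁ t) (hbox₂ t), sat_conj.mpr ?_⟩
    simp only [List.mem_map]
    rintro _ ⟨γ, hγ, rfl⟩
    obtain ⟨t, ht, hγt⟩ := sat_dia.mp (sat_conj.mp hdia₁ _ (List.mem_map_of_mem hγ))
    exact sat_dia.mpr ⟨t, (hR _ t).mpr (.inl ht), hγt⟩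

end Semantics

/-- Roots `inl X`, all with empty valuation, each seeing (for every agent) exactly the dead-end
leaves `inr x` with `x ∈ X`; the leaf `inr x` has valuation `val x`. -/
abbrev fanModel {ι : Type} (val : ι → P → Prop) : KM A P where
  S := Set ι ⊕ ι
  R _ s t := match s, t with
    | .inl X, .inr x => x ∈ X
    | _, _ => False
  V s q := match s with
    | .inl _ => False
    | .inr x => val x q

namespace fanModel

variable {ι : Type} {val : ι → P → Prop}

theorem r_inl_union (a : A) (X Y : Set ι) (t : (fanModel (A := A) val).S) :
    (fanModel val).R a (.inl (X ∪ Y)) t ↔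
      (fanModel val).R a (.inl X) t ∨ (fanModel val).R a (.inl Y) t := by
  cases t <;> simp

theorem sat_box_and_dia_var (a : A) (X : Set ι) (q : P) :
    Sat (fanModel val) (.inl X) ((Fm.box a (.var q)).and (Fm.dia a (.var q))) ↔
      X.Nonempty ∧ ∀ x ∈ X, val x q := by
  simp only [Sat, sat_dia, Sum.forall, Sum.exists]
  simp only [IsEmpty.forall_iff, forall_const, true_and, false_and, exists_false, false_or]
  exact ⟨fun ⟨h, x, hx, _⟩ => ⟨⟨x, hx⟩, h⟩, fun ⟨⟨x, hx⟩, h⟩ => ⟨h, x, hx, h x hx⟩⟩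

end fanModel

section Choice

variable {n : ℕ}

/-- The leaf valuation `{p j | f j} ∪ {p' j | ¬ f j}`. -/
def choiceVal (p p' : Fin n → P) (f : Fin n → Bool) (q : P) : Prop :=
  ∃ j, cond (f j) (p j) (p' j) = q

def choiceFormula (i : A) (p p' : Fin n → P) : Fm A P :=
  conj ((List.finRange n).map fun j =>
    ((Fm.box i (Fm.var (p j))).and (Fm.dia i (Fm.var (p j)))).or
    ((Fm.box i (Fm.var (p' j))).and (Fm.dia i (Fm.var (p' j)))))

variable {p p' : Fin n → P} (hpp' : Function.Injective (Sum.elim p p'))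
include hpp'

theorem choiceVal_left_iff (f : Fin n → Bool) (j : Fin n) :
    choiceVal p p' f (p j) ↔ f j = true := by
  refine ⟨fun ⟨k, hk⟩ => ?_, fun hj => ⟨j, by simp [hj]⟩⟩
  cases hfk : f k <;> rw [hfk] at hk
  · exact absurd (hpp' (a₁ := .inr k) (a₂ := .inl j) hk) (by simp)
  · obtain rfl : k = j := Sum.inl_injective (hpp' (a₁ := .inl k) (a₂ := .inl j) hk)
    exact hfk

theorem choiceVal_right_iff (f : Fin n → Bool) (j : Fin n) :
    choiceVal p p' f (p' j) ↔ f j = false := by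
  refine ⟨fun ⟨k, hk⟩ => ?_, fun hj => ⟨j, by simp [hj]⟩⟩
  cases hfk : f k <;> rw [hfk] at hk
  · obtain rfl : k = j := Sum.inr_injective (hpp' (a₁ := .inr k) (a₂ := .inr j) hk)
    exact hfk
  · exact absurd (hpp' (a₁ := .inl k) (a₂ := .inr j) hk) (by simp)

theorem sat_choiceFormula_iff (i : A) (X : Set (Fin n → Bool)) :
    Sat (fanModel (choiceVal p p')) (.inl X) (choiceFormula i p p') ↔
      ∀ j, X.Nonempty ∧ ((∀ f ∈ X, f j = true) ∨ (∀ f ∈ X, f j = false)) := by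
  rw [choiceFormula, sat_conj]
  simp only [List.mem_map, List.mem_finRange, true_and,
    forall_exists_index, forall_apply_eq_imp_iff, sat_or, fanModel.sat_box_and_dia_var,
    choiceVal_left_iff hpp', choiceVal_right_iff hpp', and_or_left]

theorem sat_choiceFormula_singleton (i : A) (f : Fin n → Bool) :
    Sat (fanModel (choiceVal p p')) (.inl {f}) (choiceFormula i p p') := by
  refine (sat_choiceFormula_iff hpp' i {f}).mpr fun j => ⟨Set.singleton_nonempty f, ?_⟩
  cases f j <;> simp

theorem eq_of_sat_choiceFormula_pair {i : A} {f g : Fin n → Bool}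
    (h : Sat (fanModel (choiceVal p p')) (.inl ({f} ∪ {g})) (choiceFormula i p p')) :
    f = g := by
  funext j
  rcases ((sat_choiceFormula_iff hpp' i _).mp h j).2 with hj | hj <;>
    simp [hj f (by simp), hj g (by simp)]

end Choice

theorem Fintype.card_le_length_of_injective {α β : Type*} [Fintype α] {L : List β} (e : α → β)
    (he : Function.Injective e) (hL : ∀ a, e a ∈ L) : Fintype.card α ≤ L.length := by
  classical
  calc Fintype.card α ≤ L.toFinset.card :=
        Finset.card_le_card_of_injOn e (fun a _ => List.mem_toFinset.mpr (hL a)) he.injOn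
    _ ≤ L.length := L.toFinset_card_le

theorem sdnf_lower_bound (n : ℕ) (hn : 1 ≤ n) (i : A)
    (p p' : Fin n → P)
    (hdistinct : Function.Injective (Sum.elim p p' : Fin n ⊕ Fin n → P))
    (Ts : List (Fm A P)) (hTs : ∀ t ∈ Ts, IsSTE t)
    (heq : FEquiv (disj Ts)
      (conj ((List.finRange n).map fun j =>
        ((Fm.box i (Fm.var (p j))).and (Fm.dia i (Fm.var (p j)))).or
        ((Fm.box i (Fm.var (p' j))).and (Fm.dia i (Fm.var (p' j))))))) :
    2 ^ n ≤ Ts.length := by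
  let M : KM A P := fanModel (choiceVal p p')
  have hsome : ∀ f : Fin n → Bool, ∃ T ∈ Ts, Sat M (.inl {f}) T := fun f =>
    sat_disj.mp (heq.2 M _ (sat_choiceFormula_singleton hdistinct i f))
  choose T hTmem hTsat using hsome
  have hinj : Function.Injective T := fun f g hfg => by
    have hmerge : Sat M (.inl ({f} ∪ {g})) (T f) :=
      (hTs _ (hTmem f)).sat_of_succ_eq_union (s₁ := .inl {f}) (s₂ := .inl {g}) (fun _ => Iff.rfl)
        (fanModel.r_inl_union · _ _) (hTsat f) (hfg ▸ hTsat g)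
    exact eq_of_sat_choiceFormula_pair hdistinct (heq.1 M _ (sat_disj.mpr ⟨_, hTmem f, hmerge⟩))
  simpa using Fintype.card_le_length_of_injective T hinj hTmem
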